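/- Let X₁,…,X_n be i.i.d. real random variables with E[X] = 0 and E[|X|^ρ] < ∞ for some ρ ∈ [1,2]. Then P( | (1/n) Σ_{i=1}^n X_i | ≥ n^{(2−ρ)/ρ} ) ≤ 2 E[|X|^ρ] / n. -/

import Mathlib

open MeasureTheory Matrix Filter ProbabilityTheory
open scoped BigOperators ENNReal NNReal Topology

noncomputable section

/-- The Euclidean norm `‖v‖₂` of a vector `v ∈ ℝ^k`. -/
def enorm2 {k : ℕ} (v : Fin k → ℝ) : ℝ := Real.sqrt (∑ i, v i ^ 2)

/-- The operator norm `‖A‖₂` of a matrix with respect to Euclidean norms. -/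
def opNorm2 {a b : ℕ} (A : Matrix (Fin a) (Fin b) ℝ) : ℝ :=
  sSup {r : ℝ | ∃ v : Fin b → ℝ, enorm2 v = 1 ∧ r = enorm2 (A.mulVec v)}

/-- The smallest eigenvalue `σ_min(A)` of a symmetric matrix, realized as the minimum of the
quadratic form over the unit sphere. -/
def sigmaMin {k : ℕ} (A : Matrix (Fin k) (Fin k) ℝ) : ℝ :=
  sInf {r : ℝ | ∃ v : Fin k → ℝ, enorm2 v = 1 ∧ r = v ⬝ᵥ A.mulVec v}

/-- The squared Mahalanobis norm `‖v‖_Σ² = vᵀ Σ⁻¹ v`. -/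
def mahal {m : ℕ} (S : Matrix (Fin m) (Fin m) ℝ) (v : Fin m → ℝ) : ℝ :=
  v ⬝ᵥ (S⁻¹).mulVec v

/-- The Jacobian matrix `Dh(x) ∈ ℝ^{d×m}` of `h : ℝ^m → ℝ^d` at `x`. -/
def jac {m d : ℕ} (h : (Fin m → ℝ) → (Fin d → ℝ)) (x : Fin m → ℝ) : Matrix (Fin d) (Fin m) ℝ :=
  Matrix.of fun β γ => fderiv ℝ h x (Pi.single γ 1) β

/-- The Hessian matrix `D²h^β(x) ∈ ℝ^{m×m}` of the `β`-th component of `h` at `x`. -/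
def hess {m d : ℕ} (h : (Fin m → ℝ) → (Fin d → ℝ)) (β : Fin d) (x : Fin m → ℝ) :
    Matrix (Fin m) (Fin m) ℝ :=
  Matrix.of fun i j =>
    fderiv ℝ (fun y => fderiv ℝ (fun z => h z β) y (Pi.single j 1)) x (Pi.single i 1)

/-- Assumption (CH): `0` lies in the interior of the convex hull of the range of `h`. -/
def AssumptionCH {m d : ℕ} (h : (Fin m → ℝ) → Fin d → ℝ) : Prop :=
  (0 : Fin d → ℝ) ∈ interior (convexHull ℝ (Set.range h))

/-- Assumption (D1): `h ∈ C³` and the Jacobian is Lipschitz with modulus `κ₁`. -/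
def AssumptionD1 {m d : ℕ} (h : (Fin m → ℝ) → Fin d → ℝ) (κ₁ : (Fin m → ℝ) → ℝ) : Prop :=
  ContDiff ℝ 3 h ∧ (∀ x, 0 ≤ κ₁ x) ∧
    ∀ (x Δ : Fin m → ℝ) (ζ : Fin d → ℝ),
      enorm2 (fun γ => ∑ β, ζ β * (jac h (x + Δ) β γ - jac h x β γ)) ≤
        κ₁ x * enorm2 Δ * enorm2 ζ

/-- Assumption (D2): the Hessians are locally Lipschitz with modulus `κ₂` at scale `δ̂`. -/
def AssumptionD2 {m d : ℕ} (h : (Fin m → ℝ) → Fin d → ℝ) (κ₂ : (Fin m → ℝ) → ℝ)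
    (δhat : ℝ) : Prop :=
  0 < δhat ∧ (∀ x, 0 ≤ κ₂ x) ∧
    ∀ (x Δ : Fin m → ℝ) (ζ : Fin d → ℝ), enorm2 Δ ≤ δhat →
      opNorm2 (∑ β, ζ β • (hess h β (x + Δ) - hess h β x)) ≤ κ₂ x * enorm2 Δ * enorm2 ζ

/-- Optimal transport cost with ground cost `c(x̄,x) = ‖x̄ - x‖_Σ²`. -/
def otCost {m : ℕ} (S : Matrix (Fin m) (Fin m) ℝ) (Q P : Measure (Fin m → ℝ)) : ℝ≥0∞ :=
  ⨅ (π : Measure ((Fin m → ℝ) × (Fin m → ℝ))) (_ : IsProbabilityMeasure π)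
    (_ : π.map Prod.fst = Q) (_ : π.map Prod.snd = P),
    ∫⁻ p, ENNReal.ofReal (mahal S (p.1 - p.2)) ∂π

/-- The empirical measure of the sample `X₁, …, X_n`. -/
def empMeas {m n : ℕ} (X : Fin n → Fin m → ℝ) : Measure (Fin m → ℝ) :=
  (n : ℝ≥0∞)⁻¹ • ∑ i, Measure.dirac (X i)

/-- The Wasserstein projection value `R_n(h)`. -/
def Rn {m d n : ℕ} (S : Matrix (Fin m) (Fin m) ℝ) (h : (Fin m → ℝ) → Fin d → ℝ)
    (X : Fin n → Fin m → ℝ) : ℝ≥0∞ :=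
  ⨅ (P : Measure (Fin m → ℝ)) (_ : IsProbabilityMeasure P) (_ : Integrable h P)
    (_ : (∫ x, h x ∂P) = 0), otCost S (empMeas X) P

/-- The inner objective `ζᵀ ∫₀¹ Dh(Xᵢ + n^{-1/2}Δu)Δ du − ‖Δ‖_Σ²`. -/
def innerObj {m d : ℕ} (S : Matrix (Fin m) (Fin m) ℝ) (h : (Fin m → ℝ) → Fin d → ℝ)
    (n : ℕ) (Xi : Fin m → ℝ) (ζ : Fin d → ℝ) (Δ : Fin m → ℝ) : ℝ :=
  (∫ u in (0:ℝ)..1, ζ ⬝ᵥ (jac h (Xi + ((Real.sqrt n)⁻¹ * u) • Δ)).mulVec Δ) - mahal S Δ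

/-- The dual function `M_n(ζ)`, with values in `[0,∞]`. -/
def Mn {m d n : ℕ} (S : Matrix (Fin m) (Fin m) ℝ) (h : (Fin m → ℝ) → Fin d → ℝ)
    (X : Fin n → Fin m → ℝ) (ζ : Fin d → ℝ) : ℝ≥0∞ :=
  (n : ℝ≥0∞)⁻¹ * ∑ i, ⨆ Δ : Fin m → ℝ, ENNReal.ofReal (innerObj S h n (X i) ζ Δ)

/-- `H_n = n^{-1/2} ∑ᵢ h(Xᵢ)`. -/
def Hn {m d n : ℕ} (h : (Fin m → ℝ) → Fin d → ℝ) (X : Fin n → Fin m → ℝ) : Fin d → ℝ :=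
  (Real.sqrt n)⁻¹ • ∑ i, h (X i)

/-- `𝒱_n = n⁻¹ ∑ᵢ Dh(Xᵢ) Σ Dh(Xᵢ)ᵀ`. -/
def Vn {m d n : ℕ} (S : Matrix (Fin m) (Fin m) ℝ) (h : (Fin m → ℝ) → Fin d → ℝ)
    (X : Fin n → Fin m → ℝ) : Matrix (Fin d) (Fin d) ℝ :=
  (n : ℝ)⁻¹ • ∑ i, jac h (X i) * S * (jac h (X i))ᵀ

/-- `𝒲_n = n⁻¹ ∑ᵢ h(Xᵢ) h(Xᵢ)ᵀ`. -/
def Wn {m d n : ℕ} (h : (Fin m → ℝ) → Fin d → ℝ) (X : Fin n → Fin m → ℝ) :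
    Matrix (Fin d) (Fin d) ℝ :=
  (n : ℝ)⁻¹ • ∑ i, Matrix.vecMulVec (h (X i)) (h (X i))

/-- Entry of the tensor `Dh^β(x) Σ D²h^γ(x) Σ Dh^ω(x)ᵀ`. -/
def KnE {m d : ℕ} (S : Matrix (Fin m) (Fin m) ℝ) (h : (Fin m → ℝ) → Fin d → ℝ)
    (x : Fin m → ℝ) (β γ ω : Fin d) : ℝ :=
  jac h x β ⬝ᵥ S.mulVec ((hess h γ x).mulVec (S.mulVec (jac h x ω)))

/-- The tensor `𝒦_n`. -/
def Kn {m d n : ℕ} (S : Matrix (Fin m) (Fin m) ℝ) (h : (Fin m → ℝ) → Fin d → ℝ)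
    (X : Fin n → Fin m → ℝ) (β γ ω : Fin d) : ℝ :=
  (n : ℝ)⁻¹ * ∑ i, KnE S h (X i) β γ ω

/-- `ξ_n = 𝒱_n⁻¹ H_n`. -/
def xin {m d n : ℕ} (S : Matrix (Fin m) (Fin m) ℝ) (h : (Fin m → ℝ) → Fin d → ℝ)
    (X : Fin n → Fin m → ℝ) : Fin d → ℝ :=
  ((Vn S h X)⁻¹).mulVec (Hn h X)

/-- The quadratic term `⟨𝒱_n, ξ_n^{⊗2}⟩`. -/
def quadTerm {m d n : ℕ} (S : Matrix (Fin m) (Fin m) ℝ) (h : (Fin m → ℝ) → Fin d → ℝ)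
    (X : Fin n → Fin m → ℝ) : ℝ :=
  xin S h X ⬝ᵥ (Vn S h X).mulVec (xin S h X)

/-- The cubic term `⟨𝒦_n, ξ_n^{⊗3}⟩`. -/
def cubTerm {m d n : ℕ} (S : Matrix (Fin m) (Fin m) ℝ) (h : (Fin m → ℝ) → Fin d → ℝ)
    (X : Fin n → Fin m → ℝ) : ℝ :=
  ∑ β, ∑ γ, ∑ ω, Kn S h X β γ ω * xin S h X β * xin S h X γ * xin S h X ω

/-- The cubic form `L_n(ζ)`. -/
def Ln {m d n : ℕ} (S : Matrix (Fin m) (Fin m) ℝ) (h : (Fin m → ℝ) → Fin d → ℝ)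
    (X : Fin n → Fin m → ℝ) (ζ : Fin d → ℝ) : ℝ :=
  (1/8) * ∑ β, ∑ γ, ∑ ω, ζ β * ζ γ * ζ ω * Kn S h X β γ ω

/-- `F_n(ζ) = ¼ ζᵀ𝒱_nζ + n^{-1/2} L_n(ζ)`. -/
def Fn {m d n : ℕ} (S : Matrix (Fin m) (Fin m) ℝ) (h : (Fin m → ℝ) → Fin d → ℝ)
    (X : Fin n → Fin m → ℝ) (ζ : Fin d → ℝ) : ℝ :=
  (1/4) * (ζ ⬝ᵥ (Vn S h X).mulVec ζ) + (Real.sqrt n)⁻¹ * Ln S h X ζ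

/-- The gradient `∇L_n(ζ)`. -/
def gradLn {m d n : ℕ} (S : Matrix (Fin m) (Fin m) ℝ) (h : (Fin m → ℝ) → Fin d → ℝ)
    (X : Fin n → Fin m → ℝ) (ζ : Fin d → ℝ) : Fin d → ℝ :=
  fun β => fderiv ℝ (Ln S h X) ζ (Pi.single β 1)

/-- The population matrix `V = E[Dh(X) Σ Dh(X)ᵀ]`. -/
def VP {m d : ℕ} (S : Matrix (Fin m) (Fin m) ℝ) (h : (Fin m → ℝ) → Fin d → ℝ)
    (P : Measure (Fin m → ℝ)) : Matrix (Fin d) (Fin d) ℝ :=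
  Matrix.of fun β γ => ∫ x, (jac h x * S * (jac h x)ᵀ) β γ ∂P

/-- The population matrix `W = E[h(X) h(X)ᵀ]`. -/
def WP {m d : ℕ} (h : (Fin m → ℝ) → Fin d → ℝ) (P : Measure (Fin m → ℝ)) :
    Matrix (Fin d) (Fin d) ℝ :=
  Matrix.of fun β γ => ∫ x, h x β * h x γ ∂P

/-- `E[‖Dh(X)‖₂² κ₁(X)]`. -/
def momA {m d : ℕ} (h : (Fin m → ℝ) → Fin d → ℝ) (κ₁ : (Fin m → ℝ) → ℝ)
    (P : Measure (Fin m → ℝ)) : ℝ := ∫ x, opNorm2 (jac h x) ^ 2 * κ₁ x ∂P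

/-- `E[‖Dh(X)‖₂² κ₁(X)²]`. -/
def momB {m d : ℕ} (h : (Fin m → ℝ) → Fin d → ℝ) (κ₁ : (Fin m → ℝ) → ℝ)
    (P : Measure (Fin m → ℝ)) : ℝ := ∫ x, opNorm2 (jac h x) ^ 2 * κ₁ x ^ 2 ∂P

/-- `E[‖Dh(X)‖₂³ κ₂(X)]`. -/
def momC {m d : ℕ} (h : (Fin m → ℝ) → Fin d → ℝ) (κ₂ : (Fin m → ℝ) → ℝ)
    (P : Measure (Fin m → ℝ)) : ℝ := ∫ x, opNorm2 (jac h x) ^ 3 * κ₂ x ∂P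

/-- `E[‖Dh(X)‖₂³ κ₁(X) κ₂(X)]`. -/
def momD {m d : ℕ} (h : (Fin m → ℝ) → Fin d → ℝ) (κ₁ κ₂ : (Fin m → ℝ) → ℝ)
    (P : Measure (Fin m → ℝ)) : ℝ := ∫ x, opNorm2 (jac h x) ^ 3 * κ₁ x * κ₂ x ∂P

/-- `E[‖Dh(X)‖₂² κ₁(X)³]`. -/
def momE {m d : ℕ} (h : (Fin m → ℝ) → Fin d → ℝ) (κ₁ : (Fin m → ℝ) → ℝ)
    (P : Measure (Fin m → ℝ)) : ℝ := ∫ x, opNorm2 (jac h x) ^ 2 * κ₁ x ^ 3 ∂P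

/-- `E[‖Dh(X)‖₂³ κ₁(X)² κ₂(X)]`. -/
def momF {m d : ℕ} (h : (Fin m → ℝ) → Fin d → ℝ) (κ₁ κ₂ : (Fin m → ℝ) → ℝ)
    (P : Measure (Fin m → ℝ)) : ℝ := ∫ x, opNorm2 (jac h x) ^ 3 * κ₁ x ^ 2 * κ₂ x ∂P

/-- Condition A on the sample. -/
def CondA {m d n : ℕ} (S : Matrix (Fin m) (Fin m) ℝ) (h : (Fin m → ℝ) → Fin d → ℝ)
    (κ₁ κ₂ : (Fin m → ℝ) → ℝ) (P : Measure (Fin m → ℝ)) (X : Fin n → Fin m → ℝ) : Prop :=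
  (2⁻¹ * sigmaMin (VP S h P) ≤ sigmaMin (Vn S h X)) ∧
  (enorm2 (Hn h X) ≤ 2 * Real.sqrt (Real.log n)) ∧
  (∀ i, opNorm2 (jac h (X i)) ≤ (n : ℝ) ^ ((1 : ℝ)/4)) ∧
  (∀ i, κ₁ (X i) ≤ (n : ℝ) ^ ((1 : ℝ)/4)) ∧
  (|(n : ℝ)⁻¹ * ∑ i, opNorm2 (jac h (X i)) ^ 2 * κ₁ (X i)| ≤ 1 + momA h κ₁ P) ∧
  (|(n : ℝ)⁻¹ * ∑ i, opNorm2 (jac h (X i)) ^ 2 * κ₁ (X i) ^ 2| ≤ 1 + momB h κ₁ P) ∧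
  (|(n : ℝ)⁻¹ * ∑ i, opNorm2 (jac h (X i)) ^ 3 * κ₂ (X i)| ≤ 1 + momC h κ₂ P) ∧
  (|(n : ℝ)⁻¹ * ∑ i, opNorm2 (jac h (X i)) ^ 3 * κ₁ (X i) * κ₂ (X i)|
      ≤ Real.sqrt n + momD h κ₁ κ₂ P) ∧
  (|(n : ℝ)⁻¹ * ∑ i, opNorm2 (jac h (X i)) ^ 2 * κ₁ (X i) ^ 3| ≤ Real.sqrt n + momE h κ₁ P) ∧
  (|(n : ℝ)⁻¹ * ∑ i, opNorm2 (jac h (X i)) ^ 3 * κ₁ (X i) ^ 2 * κ₂ (X i)|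
      ≤ (n : ℝ) + momF h κ₁ κ₂ P)

open Classical in
/-- The principal square root of a positive semidefinite matrix (junk value `0` otherwise). -/
def matSqrt {k : ℕ} (A : Matrix (Fin k) (Fin k) ℝ) : Matrix (Fin k) (Fin k) ℝ :=
  if hA : A.PosSemidef then
    (hA.1.eigenvectorUnitary : Matrix (Fin k) (Fin k) ℝ) * diagonal (RCLike.ofReal ∘ Real.sqrt ∘ hA.1.eigenvalues) *
      (star hA.1.eigenvectorUnitary : Matrix (Fin k) (Fin k) ℝ) else 0

/-- The standard Gaussian density on `ℝ^d`. -/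
def gaussDensity (d : ℕ) (v : Fin d → ℝ) : ℝ :=
  (2 * Real.pi) ^ (-(d : ℝ)/2) * Real.exp (-(∑ i, v i ^ 2)/2)

/-- `F_{W,V}(z) = ∫_{vᵀW^{1/2}V⁻¹W^{1/2}v ≤ z} φ(v) dv`. -/
def FWV {d : ℕ} (W V : Matrix (Fin d) (Fin d) ℝ) (z : ℝ) : ℝ :=
  ∫ v in {v : Fin d → ℝ | v ⬝ᵥ (matSqrt W * V⁻¹ * matSqrt W).mulVec v ≤ z}, gaussDensity d v

/-- The `(1-α)`-quantile `z_{W,V} = F_{W,V}⁻¹(1-α)`. -/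
def zQuantile {d : ℕ} (α : ℝ) (W V : Matrix (Fin d) (Fin d) ℝ) : ℝ :=
  sInf {z : ℝ | 0 < z ∧ 1 - α ≤ FWV W V z}

/-- The Frobenius inner product of two square matrices. -/
def frob {k : ℕ} (A B : Matrix (Fin k) (Fin k) ℝ) : ℝ := ∑ i, ∑ j, A i j * B i j

/-- The matrix exponential (defined entrywise by the exponential series). -/
def matExp {k : ℕ} (A : Matrix (Fin k) (Fin k) ℝ) : Matrix (Fin k) (Fin k) ℝ :=
  Matrix.of fun i j => ∑' t : ℕ, (t.factorial : ℝ)⁻¹ * (A ^ t) i j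

/-- The matrix `L_{W,V}`. -/
def LWV {d : ℕ} (α : ℝ) (W V : Matrix (Fin d) (Fin d) ℝ) : Matrix (Fin d) (Fin d) ℝ :=
  Matrix.of fun j k =>
    ∫ v in {v : Fin d → ℝ | ∑ i, v i ^ 2 ≤ zQuantile α W V},
      (2 * Real.pi) ^ (-(d : ℝ)/2) *
        Real.exp (-(v ⬝ᵥ (matSqrt V * W⁻¹ * matSqrt V).mulVec v)/2) *
        Real.sqrt (matSqrt V * W⁻¹ * matSqrt V).det *
        (-(1/2) * (v j * v k) + (1/2) * ((matSqrt V)⁻¹ * W * (matSqrt V)⁻¹) j k)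

/-- The differential `d(V^{1/2} W⁻¹ V^{1/2})` in the directions `(dW, dV)`. -/
def PhiDiff {d : ℕ} (W V dW dV : Matrix (Fin d) (Fin d) ℝ) : Matrix (Fin d) (Fin d) ℝ :=
  (Matrix.of fun i j => ∫ s in Set.Ioi (0:ℝ),
      (matExp (-(s • matSqrt V)) * dV * matExp (-(s • matSqrt V))) i j) * W⁻¹ * matSqrt V
  - matSqrt V * W⁻¹ * dW * W⁻¹ * matSqrt V
  + matSqrt V * W⁻¹ *
    (Matrix.of fun i j => ∫ s in Set.Ioi (0:ℝ),
      (matExp (-(s • matSqrt V)) * dV * matExp (-(s • matSqrt V))) i j)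

/-- The linear functional `𝓛_{W,V}(dW, dV)`. -/
def calL {d : ℕ} (α : ℝ) (W V dW dV : Matrix (Fin d) (Fin d) ℝ) : ℝ :=
  frob (LWV α W V) (PhiDiff W V dW dV) / frob (LWV α W V) (matSqrt V * W⁻¹ * matSqrt V)

/-- The total variation distance between two measures. -/
def tvDist {α : Type*} [MeasurableSpace α] (P Q : Measure α) : ℝ :=
  sSup {r : ℝ | ∃ s : Set α, MeasurableSet s ∧ r = |(P s).toReal - (Q s).toReal|}

/-- `sup_{‖t‖₂ ≥ b} |∫ exp(i tᵀ y) dP(y)|`. -/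
def charAbsSup {d : ℕ} (P : Measure (Fin d → ℝ)) (b : ℝ) : ℝ :=
  sSup {r : ℝ | ∃ t : Fin d → ℝ, b ≤ enorm2 t ∧
    r = ‖∫ y, Complex.exp (Complex.I * ((t ⬝ᵥ y : ℝ) : ℂ)) ∂P‖}

/-- Cramér's condition for a measure on `ℝ^d`. -/
def CramerCond {d : ℕ} (P : Measure (Fin d → ℝ)) : Prop :=
  ∀ b : ℝ, 0 < b → charAbsSup P b < 1

/-- Entrywise mean `E[A]` of a matrix-valued law. -/
def matMean {k : ℕ} (ν : Measure (Fin k → Fin k → ℝ)) : Matrix (Fin k) (Fin k) ℝ :=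
  Matrix.of fun i j => ∫ x, x i j ∂ν

/-- Entrywise mean `E[(A - E[A])²]` of a matrix-valued law. -/
def matVar {k : ℕ} (ν : Measure (Fin k → Fin k → ℝ)) : Matrix (Fin k) (Fin k) ℝ :=
  Matrix.of fun i j => ∫ x, ((Matrix.of x - matMean ν) * (Matrix.of x - matMean ν)) i j ∂ν

/-! For `1 ≤ p ≤ 2` and `ψ a = |a| ^ p / a = sign a * |a| ^ (p - 1)` one has the pointwise bound
`|a + b| ^ p ≤ |a| ^ p + p * ψ a * b + 2 * |b| ^ p` (scale to `a = 1`; for `|t| ≤ 1` use concavity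
of `(1 + t) ^ (p - 1)`). For independent `f`, `g` with `E g = 0` the cross term has mean
`E (ψ ∘ f) * E g = 0`, so `E |f + g| ^ p ≤ E |f| ^ p + 2 E |g| ^ p`. Adding the summands one at a
time gives the von Bahr–Esseen bound `E |X₁ + ⋯ + X_n| ^ ρ ≤ 2 n E |X| ^ ρ`, and since
`|S_n / n| ≥ n ^ ((2 - ρ) / ρ)` means `|S_n| ^ ρ ≥ n ^ 2`, Markov's inequality finishes. -/

namespace Real

variable {p : ℝ}

theorem one_add_rpow_le_of_abs_le_one (hp1 : 1 ≤ p) (hp2 : p ≤ 2) {t : ℝ} (ht : |t| ≤ 1) :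
    (1 + t) ^ p ≤ 1 + p * t + |t| ^ p := by
  obtain ⟨ht₁, ht₂⟩ := abs_le.mp ht
  have hconcave : (1 + t) ^ (p - 1) ≤ 1 + (p - 1) * t :=
    rpow_one_add_le_one_add_mul_self ht₁ (by linarith) (by linarith)
  have hsq : t ^ 2 ≤ |t| ^ p := by
    rw [← sq_abs, ← rpow_two]
    exact rpow_le_rpow_of_exponent_ge' (abs_nonneg t) ht (by linarith) hp2
  calc (1 + t) ^ p = (1 + t) * (1 + t) ^ (p - 1) := by
        rw [← rpow_one_add' (by linarith) (by linarith), add_sub_cancel]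
    _ ≤ (1 + t) * (1 + (p - 1) * t) := by gcongr; linarith
    _ ≤ 1 + p * t + |t| ^ p := by nlinarith [sq_nonneg t]

theorem one_add_rpow_le_of_one_le (hp1 : 1 ≤ p) (hp2 : p ≤ 2) {t : ℝ} (ht : 1 ≤ t) :
    (1 + t) ^ p ≤ 1 + p * t + 2 * t ^ p := by
  have hsubadd : (1 + t) ^ (p - 1) ≤ 1 + t ^ (p - 1) := by
    simpa using rpow_add_le_add_rpow zero_le_one (by linarith : (0:ℝ) ≤ t)
      (by linarith : 0 ≤ p - 1) (by linarith)
  have hpow : t ^ (p - 1) ≤ t ^ p := rpow_le_rpow_of_exponent_le ht (by linarith)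
  have hsplit : ∀ s : ℝ, 0 ≤ s → s ^ p = s * s ^ (p - 1) := fun s hs => by
    rw [← rpow_one_add' hs (by linarith), add_sub_cancel]
  calc (1 + t) ^ p = (1 + t) * (1 + t) ^ (p - 1) := hsplit _ (by linarith)
    _ ≤ (1 + t) * (1 + t ^ (p - 1)) := by gcongr
    _ = 1 + t + t ^ (p - 1) + t ^ p := by rw [hsplit t (by linarith)]; ring
    _ ≤ 1 + p * t + 2 * t ^ p := by nlinarith

theorem abs_one_add_rpow_le_of_le_neg_one (hp1 : 1 ≤ p) (hp2 : p ≤ 2) {t : ℝ} (ht : t ≤ -1) :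
    |1 + t| ^ p ≤ 1 + p * t + 2 * |t| ^ p := by
  rw [abs_of_nonpos (by linarith), abs_of_neg (by linarith)]
  have hshrink : (-(1 + t)) ^ p ≤ (-t) ^ p :=
    rpow_le_rpow (by linarith) (by linarith) (by linarith)
  have hbernoulli : 1 + p * (-t - 1) ≤ (-t) ^ p := by
    simpa using one_add_mul_self_le_rpow_one_add (s := -t - 1) (by linarith) hp1
  nlinarith

theorem abs_one_add_rpow_le (hp1 : 1 ≤ p) (hp2 : p ≤ 2) (t : ℝ) :
    |1 + t| ^ p ≤ 1 + p * t + 2 * |t| ^ p := by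
  have hp0 : 0 ≤ |t| ^ p := by positivity
  rcases le_or_gt |t| 1 with ht | ht
  · rw [abs_of_nonneg (by linarith [(abs_le.mp ht).1])]
    linarith [one_add_rpow_le_of_abs_le_one hp1 hp2 ht]
  rcases lt_abs.mp ht with ht | ht
  · rw [abs_of_pos (by linarith), abs_of_pos (by linarith)]
    exact one_add_rpow_le_of_one_le hp1 hp2 ht.le
  · exact abs_one_add_rpow_le_of_le_neg_one hp1 hp2 (by linarith)

theorem abs_add_rpow_le (hp1 : 1 ≤ p) (hp2 : p ≤ 2) (a b : ℝ) :
    |a + b| ^ p ≤ |a| ^ p + p * (|a| ^ p / a) * b + 2 * |b| ^ p := by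
  rcases eq_or_ne a 0 with rfl | ha
  · simp only [zero_rpow (by linarith : p ≠ 0), abs_zero, zero_add, div_zero, mul_zero,
      zero_mul]
    linarith [rpow_nonneg (abs_nonneg b) p]
  have hscale : ∀ x : ℝ, |a| ^ p * |x / a| ^ p = |x| ^ p := fun x => by
    rw [← mul_rpow (abs_nonneg _) (abs_nonneg _), ← abs_mul, mul_div_cancel₀ _ ha]
  calc |a + b| ^ p = |a| ^ p * |1 + b / a| ^ p := by rw [← hscale, add_div, div_self ha]
    _ ≤ |a| ^ p * (1 + p * (b / a) + 2 * |b / a| ^ p) := by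
        gcongr; exact abs_one_add_rpow_le hp1 hp2 _
    _ = |a| ^ p + p * (|a| ^ p / a) * b + 2 * |b| ^ p := by
        rw [← hscale b]; field_simp

theorem rpow_le_one_add_rpow {q : ℝ} (hq : 0 ≤ q) (hqp : q ≤ p) {x : ℝ} (hx : 0 ≤ x) :
    x ^ q ≤ 1 + x ^ p := by
  rcases le_total x 1 with h | h
  · linarith [rpow_le_one hx h hq, rpow_nonneg hx p]
  · linarith [rpow_le_rpow_of_exponent_le h hqp]

theorem abs_abs_rpow_div_self_le (hp1 : 1 ≤ p) (a : ℝ) : |(|a| ^ p / a)| ≤ 1 + |a| ^ p := by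
  rcases eq_or_ne a 0 with rfl | ha
  · simp only [div_zero, abs_zero]; positivity
  rw [abs_div, abs_of_nonneg (by positivity), ← rpow_sub_one (abs_ne_zero.mpr ha)]
  exact rpow_le_one_add_rpow (by linarith) (by linarith) (abs_nonneg a)

end Real

section VonBahrEsseen

variable {Ω : Type*} [MeasurableSpace Ω] {μ : Measure Ω} {p : ℝ}

theorem integrable_of_integrable_abs_rpow [IsFiniteMeasure μ] (hp1 : 1 ≤ p) {f : Ω → ℝ}
    (hf : AEStronglyMeasurable f μ) (hfp : Integrable (fun ω => |f ω| ^ p) μ) :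
    Integrable f μ :=
  ((integrable_const 1).add hfp).mono' hf <| ae_of_all _ fun ω => by
    simpa using Real.rpow_le_one_add_rpow zero_le_one hp1 (abs_nonneg (f ω))

theorem ProbabilityTheory.IndepFun.integral_abs_add_rpow_le [IsProbabilityMeasure μ]
    (hp1 : 1 ≤ p) (hp2 : p ≤ 2) {f g : Ω → ℝ} (hf : AEMeasurable f μ) (hg : AEMeasurable g μ)
    (hfg : IndepFun f g μ) (hfp : Integrable (fun ω => |f ω| ^ p) μ)
    (hgp : Integrable (fun ω => |g ω| ^ p) μ) (hg0 : ∫ ω, g ω ∂μ = 0) :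
    Integrable (fun ω => |f ω + g ω| ^ p) μ ∧
      ∫ ω, |f ω + g ω| ^ p ∂μ ≤ ∫ ω, |f ω| ^ p ∂μ + 2 * ∫ ω, |g ω| ^ p ∂μ := by
  set ψ : ℝ → ℝ := fun x => |x| ^ p / x
  have hψ : Measurable ψ := by fun_prop
  have hψf : Integrable (fun ω => ψ (f ω)) μ :=
    ((integrable_const 1).add hfp).mono' (hψ.comp_aemeasurable hf).aestronglyMeasurable <|
      ae_of_all _ fun ω => Real.abs_abs_rpow_div_self_le hp1 (f ω)
  have hgint : Integrable g μ := integrable_of_integrable_abs_rpow hp1 hg.aestronglyMeasurable hgp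
  have hcross : IndepFun (fun ω => ψ (f ω)) g μ := hfg.comp hψ measurable_id
  have hcross_int : Integrable (fun ω => ψ (f ω) * g ω) μ := hcross.integrable_mul hψf hgint
  have hcross_zero : ∫ ω, ψ (f ω) * g ω ∂μ = 0 := by
    rw [hcross.integral_fun_mul_eq_mul_integral hψf.1 hgint.1, hg0, mul_zero]
  have hleading : Integrable (fun ω => |f ω| ^ p + p * (ψ (f ω) * g ω)) μ :=
    hfp.add (hcross_int.const_mul p)
  have hbound_int : Integrable (fun ω => |f ω| ^ p + p * (ψ (f ω) * g ω) + 2 * |g ω| ^ p) μ :=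
    hleading.add (hgp.const_mul 2)
  have hpointwise : ∀ ω, |f ω + g ω| ^ p ≤ |f ω| ^ p + p * (ψ (f ω) * g ω) + 2 * |g ω| ^ p :=
    fun ω => by simpa only [mul_assoc] using Real.abs_add_rpow_le hp1 hp2 (f ω) (g ω)
  have hint : Integrable (fun ω => |f ω + g ω| ^ p) μ :=
    hbound_int.mono' ((hf.add hg).abs.pow_const p).aestronglyMeasurable <| ae_of_all _ fun ω => by
      rw [Real.norm_of_nonneg (by positivity)]; exact hpointwise ω
  refine ⟨hint, ?_⟩
  calc ∫ ω, |f ω + g ω| ^ p ∂μ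
      ≤ ∫ ω, |f ω| ^ p + p * (ψ (f ω) * g ω) + 2 * |g ω| ^ p ∂μ :=
        integral_mono hint hbound_int hpointwise
    _ = ∫ ω, |f ω| ^ p ∂μ + 2 * ∫ ω, |g ω| ^ p ∂μ := by
        rw [integral_add hleading (hgp.const_mul 2), integral_add hfp (hcross_int.const_mul p),
          integral_const_mul, integral_const_mul, hcross_zero, mul_zero, add_zero]

theorem ProbabilityTheory.iIndepFun.integral_abs_sum_rpow_le [IsProbabilityMeasure μ]
    (hp1 : 1 ≤ p) (hp2 : p ≤ 2) {ι : Type*} {X : ι → Ω → ℝ} (hX : ∀ i, Measurable (X i))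
    (hindep : iIndepFun X μ) (hXp : ∀ i, Integrable (fun ω => |X i ω| ^ p) μ)
    (hX0 : ∀ i, ∫ ω, X i ω ∂μ = 0) (s : Finset ι) :
    Integrable (fun ω => |∑ i ∈ s, X i ω| ^ p) μ ∧
      ∫ ω, |∑ i ∈ s, X i ω| ^ p ∂μ ≤ 2 * ∑ i ∈ s, ∫ ω, |X i ω| ^ p ∂μ := by
  classical
  induction s using Finset.cons_induction with
  | empty => simp [Real.zero_rpow (by linarith : p ≠ 0)]
  | cons a s ha ih =>
    have hindep_a : IndepFun (fun ω => ∑ i ∈ s, X i ω) (X a) μ := by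
      simpa only [Finset.sum_fn] using hindep.indepFun_finsetSum_of_notMem hX ha
    obtain ⟨hint, hle⟩ := hindep_a.integral_abs_add_rpow_le hp1 hp2
      (Finset.measurable_sum s fun i _ => hX i).aemeasurable (hX a).aemeasurable ih.1 (hXp a)
      (hX0 a)
    simp only [Finset.sum_cons, add_comm (X a _)]
    exact ⟨hint, by linarith [ih.2]⟩

theorem meas_abs_ge_le_integral_abs_rpow_div [IsFiniteMeasure μ] {Y : Ω → ℝ} (hp : 0 < p)
    {c : ℝ} (hc : 0 < c) (hY : Integrable (fun ω => |Y ω| ^ p) μ) :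
    μ {ω | c ≤ |Y ω|} ≤ ENNReal.ofReal ((∫ ω, |Y ω| ^ p ∂μ) / c ^ p) := by
  have hset : {ω | c ≤ |Y ω|} = {ω | c ^ p ≤ |Y ω| ^ p} := by
    ext ω
    exact (Real.rpow_le_rpow_iff hc.le (abs_nonneg _) hp).symm
  have hmarkov := mul_meas_ge_le_integral_of_nonneg (ae_of_all _ fun ω => by positivity) hY (c ^ p)
  rw [hset, ← ofReal_measureReal]
  exact ENNReal.ofReal_le_ofReal <| (le_div_iff₀' (by positivity)).mpr hmarkov

theorem integral_comp_eq_of_map_eq {β E : Type*} [MeasurableSpace β] [NormedAddCommGroup E]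
    [NormedSpace ℝ E] {Y : Ω → β} (hY : AEMeasurable Y μ) {ν : Measure β} (hlaw : μ.map Y = ν)
    {φ : β → E} (hφ : AEStronglyMeasurable φ ν) :
    ∫ ω, φ (Y ω) ∂μ = ∫ x, φ x ∂ν := by
  subst hlaw
  exact (integral_map hY hφ).symm

theorem integrable_comp_of_map_eq {β E : Type*} [MeasurableSpace β] [NormedAddCommGroup E]
    {Y : Ω → β} (hY : AEMeasurable Y μ) {ν : Measure β} (hlaw : μ.map Y = ν) {φ : β → E}
    (hφ : Integrable φ ν) :
    Integrable (fun ω => φ (Y ω)) μ := by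
  subst hlaw
  exact hφ.comp_aemeasurable hY

end VonBahrEsseen

theorem tail_bound_average_general
    (Ω : Type*) [MeasurableSpace Ω] (μ : Measure Ω) (hμ : IsProbabilityMeasure μ)
    (n : ℕ) (hn : 1 ≤ n) (X : Fin n → Ω → ℝ)
    (hmeas : ∀ i, Measurable (X i))
    (hindep : iIndepFun X μ)
    (ν : Measure ℝ)
    (hlaw : ∀ i, μ.map (X i) = ν)
    (ρ : ℝ) (hρ1 : 1 ≤ ρ) (hρ2 : ρ ≤ 2)
    (hmean : (∫ x, x ∂ν) = 0)
    (hmom : Integrable (fun x : ℝ => |x| ^ ρ) ν) :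
    μ {ω | (n : ℝ) ^ ((2 - ρ)/ρ) ≤ |(n : ℝ)⁻¹ * ∑ i, X i ω|} ≤
      ENNReal.ofReal (2 * (∫ x, |x| ^ ρ ∂ν) / n) := by
  have hn0 : (0 : ℝ) < n := by exact_mod_cast hn
  have hρ0 : 0 < ρ := by linarith
  have hmom_i (i : Fin n) : ∫ ω, |X i ω| ^ ρ ∂μ = ∫ x, |x| ^ ρ ∂ν :=
    integral_comp_eq_of_map_eq (hmeas i).aemeasurable (hlaw i) hmom.1
  have hmean_i (i : Fin n) : ∫ ω, X i ω ∂μ = 0 :=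
    (integral_comp_eq_of_map_eq (hmeas i).aemeasurable (hlaw i) aestronglyMeasurable_id).trans hmean
  obtain ⟨hint, hle⟩ := hindep.integral_abs_sum_rpow_le hρ1 hρ2 hmeas
    (fun i => integrable_comp_of_map_eq (hmeas i).aemeasurable (hlaw i) hmom) hmean_i Finset.univ
  simp only [hmom_i, Finset.sum_const, Finset.card_univ, Fintype.card_fin, nsmul_eq_mul] at hle
  have hthreshold : (n : ℝ) * n ^ ((2 - ρ) / ρ) = n ^ (2 / ρ) := by
    rw [← Real.rpow_one_add' hn0.le (by positivity)]
    congr 1; field_simp; ring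
  have hset : {ω | (n : ℝ) ^ ((2 - ρ) / ρ) ≤ |(n : ℝ)⁻¹ * ∑ i, X i ω|} =
      {ω | (n : ℝ) ^ (2 / ρ) ≤ |∑ i, X i ω|} := by
    ext ω
    rw [Set.mem_ofPred_eq, Set.mem_ofPred_eq, abs_mul, abs_of_pos (inv_pos.mpr hn0),
      le_inv_mul_iff₀ hn0, hthreshold]
  have hpow : ((n : ℝ) ^ (2 / ρ)) ^ ρ = n * n := by
    rw [← Real.rpow_mul hn0.le, div_mul_cancel₀ _ hρ0.ne', Real.rpow_two, sq]
  calc μ {ω | (n : ℝ) ^ ((2 - ρ) / ρ) ≤ |(n : ℝ)⁻¹ * ∑ i, X i ω|}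
      ≤ ENNReal.ofReal ((∫ ω, |∑ i, X i ω| ^ ρ ∂μ) / ((n : ℝ) ^ (2 / ρ)) ^ ρ) := by
        rw [hset]; exact meas_abs_ge_le_integral_abs_rpow_div hρ0 (by positivity) hint
    _ ≤ ENNReal.ofReal (2 * (∫ x, |x| ^ ρ ∂ν) / n) := by
        refine ENNReal.ofReal_le_ofReal ?_
        rw [hpow, div_le_div_iff₀ (by positivity) hn0]
        nlinarith

/-- Tail bound for the sample average: if `X₁, …, X_n` are i.i.d. real
random variables with `E[X] = 0` and `E[|X|^ρ] < ∞` for some `ρ ∈ [1,2]`, then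
`P( |(1/n)Σᵢ Xᵢ| ≥ n^{(2−ρ)/ρ} ) ≤ 2 E[|X|^ρ] / n`. -/
theorem tail_bound_average
    (Ω : Type*) [MeasurableSpace Ω] (μ : Measure Ω) (hμ : IsProbabilityMeasure μ)
    (n : ℕ) (hn : 1 ≤ n) (X : Fin n → Ω → ℝ)
    (hmeas : ∀ i, Measurable (X i))
    (hindep : iIndepFun X μ)
    (ν : Measure ℝ) (hν : IsProbabilityMeasure ν)
    (hlaw : ∀ i, μ.map (X i) = ν)
    (ρ : ℝ) (hρ1 : 1 ≤ ρ) (hρ2 : ρ ≤ 2)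
    (hmean : (∫ x, x ∂ν) = 0)
    (hmom : Integrable (fun x : ℝ => |x| ^ ρ) ν) :
    μ {ω | (n : ℝ) ^ ((2 - ρ)/ρ) ≤ |(n : ℝ)⁻¹ * ∑ i, X i ω|} ≤
      ENNReal.ofReal (2 * (∫ x, |x| ^ ρ ∂ν) / n) :=
  tail_bound_average_general Ω μ hμ n hn X hmeas hindep ν hlaw ρ hρ1 hρ2 hmean hmom

end
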